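/- For every integer k ≥ 2, the value g_k(γ) = (γ-1)/((k+1)γ² - 3kγ + k - 1) satisfies 0.276 < g_k(γ) < 0.5, where γ is the dominant real root of x^k - 2x^{k-1} - x^{k-2} - ... - x - 1. -/

import Mathlib

def IsDomRoot (k : ℕ) (γ : ℝ) : Prop :=
  1 < γ ∧ γ ^ k = 2 * γ ^ (k - 1) + ∑ i ∈ Finset.range (k - 1), γ ^ i

noncomputable def g (k : ℕ) (z : ℝ) : ℝ :=
  (z - 1) / (((k : ℝ) + 1) * z ^ 2 - 3 * (k : ℝ) * z + ((k : ℝ) - 1))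

/-!
Multiplying the defining equation of `γ` by `γ - 1` and summing the geometric series gives
`γ^(k-1) (γ² - 3γ + 1) = -1`. Hence `γ² - 3γ + 1 < 0`, i.e. `γ < φ² < 2.62`, and the denominator
of `g k γ` equals `γ² - 1 - k / γ^(k-1)`. As `γ > 2`, the correction `k / γ^(k-1)` lies strictly
between `0` and `(γ - 1)²`, which puts `g k γ` strictly between `1 / (γ + 1)` and `1 / 2`.
-/

lemma div_sq_sub_one_sub_mem_Ioo {z e : ℝ} (hz : 1 < z) (he : 0 < e) (he' : e < (z - 1) ^ 2) :
    (z - 1) / (z ^ 2 - 1 - e) ∈ Set.Ioo (1 / (z + 1)) (1 / 2) := by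
  have hden : 2 * (z - 1) < z ^ 2 - 1 - e := by nlinarith
  have hden_pos : 0 < z ^ 2 - 1 - e := by linarith
  constructor
  · rw [div_lt_div_iff₀ (by linarith) hden_pos]
    nlinarith
  · rw [div_lt_div_iff₀ hden_pos two_pos]
    linarith

namespace IsDomRoot

variable {k : ℕ} {γ : ℝ}

lemma pos (h : IsDomRoot k γ) : 0 < γ := zero_lt_one.trans h.1

lemma pow_mul_eq_neg_one (h : IsDomRoot k γ) (hk : k ≠ 0) :
    γ ^ (k - 1) * (γ ^ 2 - 3 * γ + 1) = -1 := by
  have hpow : γ ^ k = γ ^ (k - 1) * γ := by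
    rw [← pow_succ, Nat.sub_add_cancel (Nat.one_le_iff_ne_zero.mpr hk)]
  linear_combination (γ - 1) * h.2 - (γ - 1) * hpow + geom_sum_mul γ (k - 1)

lemma sq_sub_three_mul_add_one_neg (h : IsDomRoot k γ) (hk : k ≠ 0) :
    γ ^ 2 - 3 * γ + 1 < 0 := by
  have hs : 0 < γ ^ (k - 1) := pow_pos h.pos _
  nlinarith [h.pow_mul_eq_neg_one hk]

lemma two_lt (h : IsDomRoot k γ) (hk : 2 ≤ k) : 2 < γ := by
  have hs : 0 < γ ^ (k - 1) := pow_pos h.pos _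
  have hsum : 1 ≤ ∑ i ∈ Finset.range (k - 1), γ ^ i := by
    simpa using Finset.single_le_sum (f := fun i => γ ^ i)
      (fun i _ => (pow_pos h.pos i).le) (Finset.mem_range.mpr (by omega : 0 < k - 1))
  have hpow : γ ^ k = γ * γ ^ (k - 1) := by
    rw [← pow_succ', Nat.sub_add_cancel (by omega : 1 ≤ k)]
  refine lt_of_mul_lt_mul_right (a := γ ^ (k - 1)) ?_ hs.le
  linarith [h.2]

lemma denom_eq (h : IsDomRoot k γ) (hk : k ≠ 0) :
    ((k : ℝ) + 1) * γ ^ 2 - 3 * (k : ℝ) * γ + ((k : ℝ) - 1) = γ ^ 2 - 1 - k / γ ^ (k - 1) := by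
  have hs : γ ^ (k - 1) ≠ 0 := pow_ne_zero _ h.pos.ne'
  field_simp
  linear_combination (k : ℝ) * h.pow_mul_eq_neg_one hk

lemma natCast_lt_pow_mul_sub_one_sq (h : IsDomRoot k γ) (hk : 2 ≤ k) :
    (k : ℝ) < γ ^ (k - 1) * (γ - 1) ^ 2 := by
  have hγ := h.two_lt hk
  have hk_le : k ≤ 2 ^ (k - 1) := by
    have := Nat.lt_two_pow_self (n := k - 1)
    omega
  calc (k : ℝ) ≤ 2 ^ (k - 1) := by exact_mod_cast hk_le
    _ < γ ^ (k - 1) := pow_lt_pow_left₀ hγ zero_le_two (by omega)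
    _ ≤ γ ^ (k - 1) * (γ - 1) ^ 2 := le_mul_of_one_le_right (by positivity) (by nlinarith)

end IsDomRoot

theorem g_bounds (k : ℕ) (hk : 2 ≤ k) (γ : ℝ) (hγ : IsDomRoot k γ) :
    0.276 < g k γ ∧ g k γ < 0.5 := by
  have hk0 : k ≠ 0 := by omega
  have hs : 0 < γ ^ (k - 1) := pow_pos hγ.pos _
  have hcorr : (k : ℝ) / γ ^ (k - 1) < (γ - 1) ^ 2 := by
    rw [div_lt_iff₀ hs, mul_comm]
    exact hγ.natCast_lt_pow_mul_sub_one_sq hk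
  obtain ⟨hlower, hupper⟩ :=
    div_sq_sub_one_sub_mem_Ioo hγ.1 (div_pos (by positivity) hs) hcorr
  have hγ_lt : γ < 2.62 := by nlinarith [hγ.sq_sub_three_mul_add_one_neg hk0]
  rw [g, hγ.denom_eq hk0]
  refine ⟨lt_trans ?_ hlower, by linarith⟩
  rw [lt_div_iff₀ (by linarith [hγ.1])]
  linarith
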